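/- arXiv:1107.5414 — 8 statements merged into one kernel-verified Lean document; each statement's English description precedes it below -/
import Mathlib

section
/- Let R be a commutative ring of stable rank 1. Then every matrix in SL(2,R) can be written as a product u1·l1·u2·l2 where u1,u2 are upper unitriangular and l1,l2 are lower unitriangular 2×2 matrices over R. Equivalently, SL(2,R) = U(2,R)·U⁻(2,R)·U(2,R)·U⁻(2,R). -/
/-!
Multiplying `g = !![p, q; r, s]` on the left by `!![1, z; 0, 1]` replaces `q` by `q + z * s`.
Since `p * s - q * r = 1`, the entries `q, s` generate the unit ideal, so stable rank 1 supplies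
a `z` making this entry a unit. A matrix of determinant one whose upper right entry `c` is a unit
is `!![1, 0; b, 1] * !![1, c; 0, 1] * !![1, 0; d, 1]`, with `b` and `d` obtained by dividing the
diagonal entries minus one by `c`.
-/

namespace Matrix

variable {R : Type*} [CommRing R]

theorem upperUnitriangular_mul_upperUnitriangular (a b : R) :
    !![1, a; 0, 1] * !![1, b; 0, 1] = !![1, a + b; 0, 1] := by
  simp [add_comm]

theorem exists_lower_upper_lower_of_isUnit_apply_zero_one {h : Matrix (Fin 2) (Fin 2) R}
    (hdet : h.det = 1) (hunit : IsUnit (h 0 1)) :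
    ∃ b c d : R, h = !![1, 0; b, 1] * !![1, c; 0, 1] * !![1, 0; d, 1] := by
  obtain ⟨w, hinv⟩ := hunit.exists_left_inv
  rw [det_fin_two] at hdet
  refine ⟨(h 1 1 - 1) * w, h 0 1, (h 0 0 - 1) * w, ?_⟩
  rw [eta_fin_two h, mul_fin_two, mul_fin_two]
  ext i j
  fin_cases i <;> fin_cases j <;> simp only [of_apply, cons_val', cons_val_zero, cons_val_one,
    empty_val', cons_val_fin_one, Fin.zero_eta, Fin.mk_one, Fin.isValue]
  · linear_combination (1 - h 0 0) * hinv
  · ring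
  · linear_combination -w * hdet - ((h 1 1 - 1) * (h 0 0 - 1) * w + h 1 0) * hinv
  · linear_combination (1 - h 1 1) * hinv

end Matrix

/-- Over a commutative ring of stable rank 1, every matrix in
`SL(2,R)` is a product `u₁ l₁ u₂ l₂` of upper and lower unitriangular matrices. -/
theorem sl2_unitriangular_factorisation_of_stableRankOne
    (R : Type*) [CommRing R]
    (hSR : ∀ x y : R, (∃ a b : R, a * x + b * y = 1) → ∃ z : R, IsUnit (x + y * z))
    (g : Matrix (Fin 2) (Fin 2) R) (hg : g.det = 1) :
    ∃ a b c d : R,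
      g = !![1, a; 0, 1] * !![1, 0; b, 1] * !![1, c; 0, 1] * !![1, 0; d, 1] := by
  have hcoprime : -g 1 0 * g 0 1 + g 0 0 * g 1 1 = 1 := by
    rw [Matrix.det_fin_two] at hg
    linear_combination hg
  obtain ⟨z, hz⟩ := hSR (g 0 1) (g 1 1) ⟨-g 1 0, g 0 0, hcoprime⟩
  have hunit : IsUnit ((!![1, z; 0, 1] * g) 0 1) := by
    simpa [Matrix.mul_apply, Fin.sum_univ_two, mul_comm z] using hz
  have hdet : (!![1, z; 0, 1] * g).det = 1 := by
    rw [Matrix.det_mul, Matrix.det_fin_two_of, hg]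
    ring
  obtain ⟨b, c, d, hbcd⟩ := Matrix.exists_lower_upper_lower_of_isUnit_apply_zero_one hdet hunit
  refine ⟨-z, b, c, d, ?_⟩
  calc g = !![1, -z; 0, 1] * (!![1, z; 0, 1] * g) := by
        rw [← Matrix.mul_assoc, Matrix.upperUnitriangular_mul_upperUnitriangular,
          neg_add_cancel, ← Matrix.one_fin_two, Matrix.one_mul]
    _ = _ := by rw [hbcd]; simp only [Matrix.mul_assoc]
end

section
/- Every matrix in SL(2,R) over a commutative ring R that can be written as a product of four elementary transvections t12(*)·t21(*)·t12(*)·t21(*) lies in E(2,R); conversely, if R has stable rank 1, then every g ∈ SL(2,R) is such a product, hence SL(2,R) = E(2,R). -/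
/-!
Write `g = [[p, q], [r, s]]`. Since `ps - qr = 1`, the bottom row `(r, s)` is unimodular, so stable
rank 1 yields `z` with `u = r + sz` a unit; this is the lower-left entry of `g · t21(z)`.
A matrix of `SL(2,R)` whose lower-left entry is a unit `u` equals
`t12((p' - 1)u⁻¹) · t21(u) · t12((s' - 1)u⁻¹)`, its diagonal being `(p', s')` and the remaining entry
being forced by the determinant. Hence `g = t12(*) t21(u) t12(*) t21(-z)`.
-/

open Matrix

/-- `IsCoprime x y` unfolds to `∃ a b, a * x + b * y = 1`, i.e. `xR + yR = R`. -/
def HasStableRankOne (R : Type*) [CommRing R] : Prop :=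
  ∀ x y : R, IsCoprime x y → ∃ z : R, IsUnit (x + y * z)

namespace Matrix.SpecialLinearGroup

variable {R : Type*} [CommRing R]

def t12 (ξ : R) : SpecialLinearGroup (Fin 2) R :=
  ⟨!![1, ξ; 0, 1], by simp [det_fin_two_of]⟩

def t21 (ξ : R) : SpecialLinearGroup (Fin 2) R :=
  ⟨!![1, 0; ξ, 1], by simp [det_fin_two_of]⟩

@[simp]
lemma coe_t12 (ξ : R) : (t12 ξ : Matrix (Fin 2) (Fin 2) R) = !![1, ξ; 0, 1] := rfl

@[simp]
lemma coe_t21 (ξ : R) : (t21 ξ : Matrix (Fin 2) (Fin 2) R) = !![1, 0; ξ, 1] := rfl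

@[simp]
lemma t21_zero : t21 (0 : R) = 1 := by
  ext i j
  fin_cases i <;> fin_cases j <;> simp

lemma t21_mul_t21 (ξ η : R) : t21 ξ * t21 η = t21 (ξ + η) := by
  ext i j
  fin_cases i <;> fin_cases j <;> simp [mul_apply, Fin.sum_univ_two, add_comm]

lemma eq_t12_mul_t21_mul_t12_mul_t21_iff {g : SpecialLinearGroup (Fin 2) R} {a b c d : R} :
    g = t12 a * t21 b * t12 c * t21 d ↔ (g : Matrix (Fin 2) (Fin 2) R) =
      !![1, a; 0, 1] * !![1, 0; b, 1] * !![1, c; 0, 1] * !![1, 0; d, 1] :=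
  ⟨fun h => h ▸ rfl, fun h => Subtype.ext h⟩

variable (R) in
def E2 : Subgroup (SpecialLinearGroup (Fin 2) R) :=
  Subgroup.closure (Set.range t12 ∪ Set.range t21)

lemma t12_mem_E2 (ξ : R) : t12 ξ ∈ E2 R :=
  Subgroup.subset_closure (Or.inl ⟨ξ, rfl⟩)

lemma t21_mem_E2 (ξ : R) : t21 ξ ∈ E2 R :=
  Subgroup.subset_closure (Or.inr ⟨ξ, rfl⟩)

lemma t12_mul_t21_mul_t12_mul_t21_mem_E2 (a b c d : R) :
    t12 a * t21 b * t12 c * t21 d ∈ E2 R :=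
  mul_mem (mul_mem (mul_mem (t12_mem_E2 a) (t21_mem_E2 b)) (t12_mem_E2 c)) (t21_mem_E2 d)

lemma fin_two_det (g : SpecialLinearGroup (Fin 2) R) :
    g 0 0 * g 1 1 - g 0 1 * g 1 0 = 1 := by
  rw [← det_fin_two]; exact g.det_coe

lemma eq_t12_mul_t21_mul_t12_of_isUnit {g : SpecialLinearGroup (Fin 2) R} (hu : IsUnit (g 1 0)) :
    g = t12 ((g 0 0 - 1) * Ring.inverse (g 1 0)) * t21 (g 1 0) *
      t12 ((g 1 1 - 1) * Ring.inverse (g 1 0)) := by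
  have hdet := fin_two_det g
  have hinv : g 1 0 * Ring.inverse (g 1 0) = 1 := Ring.mul_inverse_cancel _ hu
  ext i j
  fin_cases i <;> fin_cases j <;> simp [mul_apply, Fin.sum_univ_two]
  · linear_combination -hinv * (g 0 0 - 1)
  · linear_combination (Ring.inverse (g 1 0) * (g 0 0 - g 0 0 * g 1 1 - 1 + g 1 1) - g 0 1) * hinv
      - Ring.inverse (g 1 0) * hdet
  · linear_combination -hinv * (g 1 1 - 1)

lemma isCoprime_apply_one_zero_apply_one_one (g : SpecialLinearGroup (Fin 2) R) :
    IsCoprime (g 1 0) (g 1 1) :=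
  ⟨-g 0 1, g 0 0, by linear_combination fin_two_det g⟩

lemma exists_isUnit_mul_t21_apply_one_zero (hR : HasStableRankOne R)
    (g : SpecialLinearGroup (Fin 2) R) : ∃ z : R, IsUnit ((g * t21 z) 1 0) := by
  obtain ⟨z, hz⟩ := hR _ _ (isCoprime_apply_one_zero_apply_one_one g)
  refine ⟨z, ?_⟩
  simpa [mul_apply, Fin.sum_univ_two] using hz

theorem exists_eq_t12_mul_t21_mul_t12_mul_t21 (hR : HasStableRankOne R)
    (g : SpecialLinearGroup (Fin 2) R) : ∃ a b c d : R, g = t12 a * t21 b * t12 c * t21 d := by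
  obtain ⟨z, hz⟩ := exists_isUnit_mul_t21_apply_one_zero hR g
  have hg : g = g * t21 z * t21 (-z) := by
    rw [mul_assoc, t21_mul_t21, add_neg_cancel, t21_zero, mul_one]
  rw [eq_t12_mul_t21_mul_t12_of_isUnit hz] at hg
  exact ⟨_, _, _, _, hg⟩

theorem E2_eq_top (hR : HasStableRankOne R) : E2 R = ⊤ := by
  refine eq_top_iff.mpr fun g _ => ?_
  obtain ⟨a, b, c, d, rfl⟩ := exists_eq_t12_mul_t21_mul_t12_mul_t21 hR g
  exact t12_mul_t21_mul_t12_mul_t21_mem_E2 a b c d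

lemma setOf_eq_range_t12_union_range_t21 :
    {g : SpecialLinearGroup (Fin 2) R | ∃ ξ : R, (g : Matrix (Fin 2) (Fin 2) R) = !![1, ξ; 0, 1] ∨
      (g : Matrix (Fin 2) (Fin 2) R) = !![1, 0; ξ, 1]} = Set.range t12 ∪ Set.range t21 := by
  ext g
  simp only [Set.mem_ofPred_eq, Set.mem_union, Set.mem_range, exists_or, eq_comm (b := g)]
  exact or_congr (exists_congr fun _ => ⟨fun h => Subtype.ext h, fun h => h ▸ rfl⟩)
    (exists_congr fun _ => ⟨fun h => Subtype.ext h, fun h => h ▸ rfl⟩)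

end Matrix.SpecialLinearGroup

open Matrix.SpecialLinearGroup

/-- A product of four elementary transvections lies in `E(2,R)`;
conversely, over a ring of stable rank 1 every `g ∈ SL(2,R)` is such a product,
hence `SL(2,R) = E(2,R)`. -/
theorem sl2_eq_e2_of_stableRankOne (R : Type*) [CommRing R]
    (S : Set (Matrix.SpecialLinearGroup (Fin 2) R))
    (hS : S = {g : Matrix.SpecialLinearGroup (Fin 2) R | ∃ ξ : R, (g : Matrix (Fin 2) (Fin 2) R) = !![1, ξ; 0, 1] ∨
      (g : Matrix (Fin 2) (Fin 2) R) = !![1, 0; ξ, 1]}) :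
    (∀ g : Matrix.SpecialLinearGroup (Fin 2) R,
      (∃ a b c d : R, (g : Matrix (Fin 2) (Fin 2) R) =
        !![1, a; 0, 1] * !![1, 0; b, 1] * !![1, c; 0, 1] * !![1, 0; d, 1]) →
      g ∈ Subgroup.closure S) ∧
    ((∀ x y : R, (∃ a b : R, a * x + b * y = 1) → ∃ z : R, IsUnit (x + y * z)) →
      (∀ g : Matrix.SpecialLinearGroup (Fin 2) R,
        ∃ a b c d : R, (g : Matrix (Fin 2) (Fin 2) R) =
          !![1, a; 0, 1] * !![1, 0; b, 1] * !![1, c; 0, 1] * !![1, 0; d, 1]) ∧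
      Subgroup.closure S = ⊤) := by
  have hE2 : Subgroup.closure S = E2 R := by
    rw [hS, setOf_eq_range_t12_union_range_t21]; rfl
  refine ⟨?_, fun hR => ⟨fun g => ?_, hE2.trans (E2_eq_top hR)⟩⟩
  · rintro g ⟨a, b, c, d, hg⟩
    rw [hE2, eq_t12_mul_t21_mul_t12_mul_t21_iff.mpr hg]
    exact t12_mul_t21_mul_t12_mul_t21_mem_E2 a b c d
  · obtain ⟨a, b, c, d, hg⟩ := exists_eq_t12_mul_t21_mul_t12_mul_t21 hR g
    exact ⟨a, b, c, d, eq_t12_mul_t21_mul_t12_mul_t21_iff.mp hg⟩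
end

section
/- Let R be a commutative ring and d = diag(ε₁,…,εₙ) a diagonal matrix with εᵢ ∈ R* and ε₁⋯εₙ = 1. Then d ∈ U(n,R)·U⁻(n,R)·U(n,R)·U⁻(n,R). -/
/-- Upper unitriangular square matrix. -/
def IsUpperUnitriangular {n : ℕ} {R : Type*} [CommRing R]
    (M : Matrix (Fin n) (Fin n) R) : Prop :=
  (∀ i, M i i = 1) ∧ ∀ i j : Fin n, j < i → M i j = 0

/-- Lower unitriangular square matrix. -/
def IsLowerUnitriangular {n : ℕ} {R : Type*} [CommRing R]
    (M : Matrix (Fin n) (Fin n) R) : Prop :=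
  (∀ i, M i i = 1) ∧ ∀ i j : Fin n, i < j → M i j = 0

/-!
Write `εᵢ = tᵢ₊₁ tᵢ⁻¹` with the prefix products `tₖ = ε₀ ⋯ εₖ₋₁`, so that `t₀ = tₙ = 1`.
For suitable superdiagonal matrices `C, B` and subdiagonal matrices `S, A` (with `S` all ones),
both `(1 + C)(1 + S)` and `d (1 + A)(1 + B)` are tridiagonal, and their entries agree: away from the
boundary this is a ring identity in the `tₖ`, and at the corners the extra terms vanish because
`t₀ = tₙ = 1`. Hence `d = (1 + C)(1 + S)(1 + B)⁻¹(1 + A)⁻¹`, and inverses of unitriangular matrices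
are unitriangular.
-/

section

open Matrix

variable {n : ℕ} {R : Type*} [CommRing R]

theorem isLowerUnitriangular_iff_transpose {M : Matrix (Fin n) (Fin n) R} :
    IsLowerUnitriangular M ↔ IsUpperUnitriangular Mᵀ :=
  and_congr_right' forall_comm

namespace IsUpperUnitriangular

variable {M : Matrix (Fin n) (Fin n) R}

theorem isUpperTriangular (hM : IsUpperUnitriangular M) : M.IsUpperTriangular :=
  fun i j h => hM.2 i j h

theorem isUnit_det (hM : IsUpperUnitriangular M) : IsUnit M.det := by
  simp [det_of_isUpperTriangular hM.isUpperTriangular, hM.1]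

theorem inv (hM : IsUpperUnitriangular M) : IsUpperUnitriangular M⁻¹ := by
  have := M.invertibleOfIsUnitDet hM.isUnit_det
  have hinv : M⁻¹.IsUpperTriangular := blockTriangular_inv_of_blockTriangular hM.isUpperTriangular
  refine ⟨fun i => ?_, fun i j h => hinv h⟩
  have hii := congr_fun₂ (M.mul_nonsing_inv hM.isUnit_det) i i
  rwa [mul_apply, Finset.sum_eq_single i, hM.1, one_mul, one_apply_eq] at hii
  · intro k _ hki
    rcases lt_or_gt_of_ne hki with h | h
    · rw [hM.2 i k h, zero_mul]
    · rw [hinv h, mul_zero]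
  · simp

end IsUpperUnitriangular

namespace IsLowerUnitriangular

variable {M : Matrix (Fin n) (Fin n) R}

theorem isUnit_det (hM : IsLowerUnitriangular M) : IsUnit M.det := by
  simpa using (isLowerUnitriangular_iff_transpose.mp hM).isUnit_det

theorem inv (hM : IsLowerUnitriangular M) : IsLowerUnitriangular M⁻¹ := by
  rw [isLowerUnitriangular_iff_transpose, transpose_nonsing_inv]
  exact (isLowerUnitriangular_iff_transpose.mp hM).inv

end IsLowerUnitriangular

def superdiag (c : ℕ → R) : Matrix (Fin n) (Fin n) R :=
  of fun i j => if (j : ℕ) = i + 1 then c i else 0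

def subdiag (a : ℕ → R) : Matrix (Fin n) (Fin n) R :=
  of fun i j => if (i : ℕ) = j + 1 then a j else 0

theorem isUpperUnitriangular_one_add_superdiag (c : ℕ → R) :
    IsUpperUnitriangular (1 + superdiag c : Matrix (Fin n) (Fin n) R) := by
  refine ⟨fun i => by simp [superdiag], fun i j h => ?_⟩
  have h' : (j : ℕ) < i := h
  simp [superdiag, one_apply, h.ne', show (j : ℕ) ≠ i + 1 by omega]

theorem isLowerUnitriangular_one_add_subdiag (a : ℕ → R) :
    IsLowerUnitriangular (1 + subdiag a : Matrix (Fin n) (Fin n) R) := by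
  refine ⟨fun i => by simp [subdiag], fun i j h => ?_⟩
  have h' : (i : ℕ) < j := h
  simp [subdiag, one_apply, h.ne, show (i : ℕ) ≠ j + 1 by omega]

theorem superdiag_mul_subdiag (c a : ℕ → R) :
    (superdiag c * subdiag a : Matrix (Fin n) (Fin n) R) =
      diagonal fun i : Fin n => if (i : ℕ) + 1 < n then c i * a i else 0 := by
  ext i j
  simp only [mul_apply, superdiag, subdiag, of_apply, ite_mul, zero_mul, mul_ite, mul_zero]
  by_cases hij : i = j
  · subst hij
    rw [diagonal_apply_eq]
    split_ifs with hi
    · rw [Finset.sum_eq_single ⟨i + 1, hi⟩] <;> grind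
    · exact Finset.sum_eq_zero fun k _ => by grind
  · rw [diagonal_apply_ne _ hij]
    exact Finset.sum_eq_zero fun k _ => by grind

theorem subdiag_mul_superdiag (a b : ℕ → R) :
    (subdiag a * superdiag b : Matrix (Fin n) (Fin n) R) =
      diagonal fun i : Fin n => if 0 < (i : ℕ) then a (i - 1) * b (i - 1) else 0 := by
  ext i j
  simp only [mul_apply, superdiag, subdiag, of_apply, ite_mul, zero_mul, mul_ite, mul_zero]
  by_cases hij : i = j
  · subst hij
    rw [diagonal_apply_eq]
    split_ifs with hi
    · rw [Finset.sum_eq_single ⟨i - 1, by omega⟩] <;> grind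
    · exact Finset.sum_eq_zero fun k _ => by grind
  · rw [diagonal_apply_ne _ hij]
    exact Finset.sum_eq_zero fun k _ => by grind

theorem diagonal_mul_superdiag (e c : ℕ → R) :
    (diagonal (fun i : Fin n => e i) * superdiag c : Matrix (Fin n) (Fin n) R) =
      superdiag fun i => e i * c i := by
  ext i j
  simp [superdiag, diagonal_mul]

theorem diagonal_mul_subdiag (e a : ℕ → R) :
    (diagonal (fun i : Fin n => e i) * subdiag a : Matrix (Fin n) (Fin n) R) =
      subdiag fun j => e (j + 1) * a j := by
  ext i j
  simp only [subdiag, diagonal_mul, of_apply, mul_ite, mul_zero]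
  split_ifs with h <;> simp [h]

theorem one_add_superdiag_mul_one_add_subdiag (c a : ℕ → R) :
    ((1 + superdiag c) * (1 + subdiag a) : Matrix (Fin n) (Fin n) R) =
      1 + diagonal (fun i : Fin n => if (i : ℕ) + 1 < n then c i * a i else 0) +
        superdiag c + subdiag a := by
  simp only [add_mul, mul_add, one_mul, mul_one, superdiag_mul_subdiag]
  abel

theorem one_add_subdiag_mul_one_add_superdiag (a b : ℕ → R) :
    ((1 + subdiag a) * (1 + superdiag b) : Matrix (Fin n) (Fin n) R) =
      1 + diagonal (fun i : Fin n => if 0 < (i : ℕ) then a (i - 1) * b (i - 1) else 0) +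
        superdiag b + subdiag a := by
  simp only [add_mul, mul_add, one_mul, mul_one, subdiag_mul_superdiag]
  abel

theorem one_add_superdiag_mul_one_add_subdiag_eq_diagonal_mul (t : ℕ → Rˣ) (ht0 : t 0 = 1)
    (htn : t n = 1) :
    (1 + superdiag fun i => (↑(t i)⁻¹ : R) * (t (i + 1) - 1)) * (1 + subdiag 1) =
      diagonal (fun i : Fin n => (↑(t (i + 1) * (t i)⁻¹) : R)) *
        ((1 + subdiag fun j => (↑(t (j + 1) * (t (j + 2))⁻¹) : R)) *
          (1 + superdiag fun i => 1 - (↑(t (i + 1))⁻¹ : R))) := by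
  rw [one_add_superdiag_mul_one_add_subdiag, one_add_subdiag_mul_one_add_superdiag]
  simp only [mul_add, mul_one, diagonal_mul_diagonal,
    diagonal_mul_superdiag (fun k => (↑(t (k + 1) * (t k)⁻¹) : R)),
    diagonal_mul_subdiag (fun k => (↑(t (k + 1) * (t k)⁻¹) : R))]
  congr 1
  · congr 1
    · rw [← diagonal_one, diagonal_add, diagonal_add]
      congr 1
      funext i
      have hlast : (if (i : ℕ) + 1 < n then (↑(t i)⁻¹ : R) * (t (i + 1) - 1) * (1 : ℕ → R) i
          else 0) = ↑(t i)⁻¹ * (t (i + 1) - 1) := by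
        split_ifs with h
        · rw [Pi.one_apply, mul_one]
        · rw [show (i : ℕ) + 1 = n by omega, htn, Units.val_one, sub_self, mul_zero]
      have hfirst : (if 0 < (i : ℕ) then (↑(t (i - 1 + 1) * (t (i - 1 + 2))⁻¹) : R) *
          (1 - ↑(t (i - 1 + 1))⁻¹) else 0) = ↑(t i * (t (i + 1))⁻¹) * (1 - ↑(t i)⁻¹) := by
        split_ifs with h
        · rw [show (i : ℕ) - 1 + 1 = i by omega, show (i : ℕ) - 1 + 2 = i + 1 by omega]
        · rw [show (i : ℕ) = 0 by omega, ht0, inv_one, Units.val_one, sub_self, mul_zero]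
      rw [hlast, hfirst]
      push_cast
      linear_combination ((↑(t i)⁻¹ : R) - 1) *
        ((t i : R) * ↑(t i)⁻¹ * Units.mul_inv (t (i + 1)) + Units.mul_inv (t i))
    · congr 1
      funext i
      push_cast
      linear_combination (↑(t i)⁻¹ : R) * Units.mul_inv (t (i + 1))
  · congr 1
    funext j
    rw [Pi.one_apply, ← Units.val_mul, ← Units.val_one]
    congr 1
    group

theorem exists_upper_lower_upper_lower_eq_diagonal (t : ℕ → Rˣ) (ht0 : t 0 = 1)
    (htn : t n = 1) :
    ∃ u₁ l₁ u₂ l₂ : Matrix (Fin n) (Fin n) R,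
      IsUpperUnitriangular u₁ ∧ IsLowerUnitriangular l₁ ∧
      IsUpperUnitriangular u₂ ∧ IsLowerUnitriangular l₂ ∧
      diagonal (fun i : Fin n => (↑(t (i + 1) * (t i)⁻¹) : R)) = u₁ * l₁ * u₂ * l₂ := by
  have hL := isLowerUnitriangular_one_add_subdiag (n := n)
    fun j => (↑(t (j + 1) * (t (j + 2))⁻¹) : R)
  have hU := isUpperUnitriangular_one_add_superdiag (n := n) fun i => 1 - (↑(t (i + 1))⁻¹ : R)
  refine ⟨1 + superdiag fun i => (↑(t i)⁻¹ : R) * (t (i + 1) - 1), 1 + subdiag 1, _, _,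
    isUpperUnitriangular_one_add_superdiag _, isLowerUnitriangular_one_add_subdiag 1,
    hU.inv, hL.inv, ?_⟩
  rw [one_add_superdiag_mul_one_add_subdiag_eq_diagonal_mul t ht0 htn, ← Matrix.mul_assoc,
    mul_nonsing_inv_cancel_right _ _ hU.isUnit_det, mul_nonsing_inv_cancel_right _ _ hL.isUnit_det]

end

/-- A diagonal matrix `diag(ε₁, …, εₙ)` with unit entries of
product 1 lies in `U·U⁻·U·U⁻`. -/
theorem diag_mem_UUmUUm (n : ℕ) (R : Type*) [CommRing R]
    (ε : Fin n → Rˣ) (hε : ∏ i, ε i = 1) :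
    ∃ u₁ l₁ u₂ l₂ : Matrix (Fin n) (Fin n) R,
      IsUpperUnitriangular u₁ ∧ IsLowerUnitriangular l₁ ∧
      IsUpperUnitriangular u₂ ∧ IsLowerUnitriangular l₂ ∧
      Matrix.diagonal (fun i => (ε i : R)) = u₁ * l₁ * u₂ * l₂ := by
  let t : ℕ → Rˣ := fun k => ((List.ofFn ε).take k).prod
  have ht0 : t 0 = 1 := List.prod_nil
  have htn : t n = 1 := by
    rw [← hε, ← List.prod_ofFn, ← List.take_of_length_le (List.length_ofFn (f := ε)).le]
  have hε_eq : (fun i => (ε i : R)) = fun i : Fin n => (↑(t (i + 1) * (t i)⁻¹) : R) := by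
    funext i
    simp [t, List.prod_take_succ _ _ (by simp : (i : ℕ) < (List.ofFn ε).length)]
  rw [hε_eq]
  exact exists_upper_lower_upper_lower_eq_diagonal t ht0 htn
end

section
/- Let R be a commutative ring, n ≥ 2, and a,b ∈ R* units. Consider indices r ≠ n and s ≠ n with r,s ≤ n. The matrix that has entry a in position (r,s), b in position (n,n), 1s in the other diagonal positions outside rows/columns r,s,n, and zeros elsewhere, when multiplied on the right by t_{ns}(b⁻¹)·t_{sn}(1-b)·t_{ns}(-1)·t_{ns}(-b⁻¹(1-b)), yields the matrix with entry ab in position (r,s) and 1 in position (n,n) (other entries unchanged). -/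
/-!
The four transvections multiply to the diagonal matrix with `b` at `(s,s)`, `b⁻¹` at `(n,n)`
and `1` elsewhere (the Whitehead-lemma factorisation of `diag(b, b⁻¹)`). Right multiplication by
a diagonal matrix scales columns: column `s` of the monomial matrix carries only the entry `a`,
which becomes `ab`, and column `n` carries only the entry `b`, which becomes `1`.
-/

open Matrix

theorem transvection_mul_eq_diagonal {R m : Type*} [CommRing R] [DecidableEq m] [Fintype m]
    {s u : m} (hsu : s ≠ u) (b : Rˣ) :
    transvection u s ((b⁻¹ : Rˣ) : R) * transvection s u (1 - (b : R)) *
        transvection u s (-1) * transvection s u (-((b⁻¹ : Rˣ) : R) * (1 - (b : R))) =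
      diagonal fun k => if k = s then (b : R) else if k = u then ((b⁻¹ : Rˣ) : R) else 1 := by
  have hb : (b : R) * ((b⁻¹ : Rˣ) : R) = 1 := b.mul_inv
  -- Each factor is a column operation, so column `l` of the product only involves columns
  -- `l`, `s`, `u` of the first factor.
  ext k l
  obtain rfl | hsl := eq_or_ne s l
  · simp [hsu]
    simp [transvection, one_apply, single_apply, diagonal_apply]
    grind
  obtain rfl | hul := eq_or_ne u l
  · simp [hsu, hsu.symm]
    simp [transvection, one_apply, single_apply, diagonal_apply]
    grind
  · simp [hsl.symm, hul.symm]
    simp [transvection, one_apply, diagonal_apply]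
    grind

theorem monomial_block_reduction_general (R : Type*) [CommRing R] (n : ℕ)
    (a b : Rˣ) (r s : Fin (n + 1)) (hs : s ≠ Fin.last n) :
    (Matrix.of fun i j : Fin (n + 1) =>
      if i = r ∧ j = s then (a : R)
      else if i = Fin.last n ∧ j = Fin.last n then (b : R)
      else if i = j ∧ i ≠ r ∧ i ≠ s then 1 else 0) *
      ((1 + Matrix.single (Fin.last n) s ((b⁻¹ : Rˣ) : R)) *
       (1 + Matrix.single s (Fin.last n) (1 - (b : R))) *
       (1 + Matrix.single (Fin.last n) s (-1)) *
       (1 + Matrix.single s (Fin.last n) (-((b⁻¹ : Rˣ) : R) * (1 - (b : R))))) =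
    (Matrix.of fun i j : Fin (n + 1) =>
      if i = r ∧ j = s then (a : R) * (b : R)
      else if i = Fin.last n ∧ j = Fin.last n then 1
      else if i = j ∧ i ≠ r ∧ i ≠ s then 1 else 0) := by
  have hb : (b : R) * ((b⁻¹ : Rˣ) : R) = 1 := b.mul_inv
  rw [← transvection, ← transvection, ← transvection, ← transvection,
    transvection_mul_eq_diagonal hs b]
  ext i j
  rw [mul_diagonal]
  simp only [of_apply]
  grind

/-- Clearing the `(n,n)`-entry of a monomial-type matrix by four
elementary transvections: the matrix with `a` at `(r,s)`, `b` at `(n,n)` and `1`s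
on the remaining diagonal positions outside rows/columns `r, s, n`, multiplied on
the right by `t_{ns}(b⁻¹)·t_{sn}(1-b)·t_{ns}(-1)·t_{sn}(-b⁻¹(1-b))`, becomes the
matrix with `ab` at `(r,s)` and `1` at `(n,n)`. -/
theorem monomial_block_reduction (R : Type*) [CommRing R] (n : ℕ) (hn : 1 ≤ n)
    (a b : Rˣ) (r s : Fin (n + 1)) (hr : r ≠ Fin.last n) (hs : s ≠ Fin.last n) :
    (Matrix.of fun i j : Fin (n + 1) =>
      if i = r ∧ j = s then (a : R)
      else if i = Fin.last n ∧ j = Fin.last n then (b : R)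
      else if i = j ∧ i ≠ r ∧ i ≠ s then 1 else 0) *
      ((1 + Matrix.single (Fin.last n) s ((b⁻¹ : Rˣ) : R)) *
       (1 + Matrix.single s (Fin.last n) (1 - (b : R))) *
       (1 + Matrix.single (Fin.last n) s (-1)) *
       (1 + Matrix.single s (Fin.last n) (-((b⁻¹ : Rˣ) : R) * (1 - (b : R))))) =
    (Matrix.of fun i j : Fin (n + 1) =>
      if i = r ∧ j = s then (a : R) * (b : R)
      else if i = Fin.last n ∧ j = Fin.last n then 1
      else if i = j ∧ i ≠ r ∧ i ≠ s then 1 else 0) :=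
  monomial_block_reduction_general R n a b r s hs
end

section
/- Let R be a commutative ring of stable rank 1 and n ≥ 2. Then SL(n,R) = U(n,R)·U⁻(n,R)·U(n,R)·U⁻(n,R), i.e., every matrix of determinant 1 is a product of an upper unitriangular, a lower unitriangular, an upper unitriangular, and a lower unitriangular matrix. -/
open Matrix

set_option linter.unusedSectionVars false
set_option maxHeartbeats 1000000

section Aux

variable {R : Type*} [CommRing R] {m : ℕ}

/-- Bordered matrix `[[a, r], [c, A]]`. -/
def bd (a : R) (r c : Fin m → R) (A : Matrix (Fin m) (Fin m) R) :
    Matrix (Fin (m+1)) (Fin (m+1)) R :=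
  Matrix.of fun i => Fin.cases (Fin.cons a r) (fun i' => Fin.cons (c i') (A i')) i

@[simp] lemma bd_zero_zero (a : R) (r c : Fin m → R) (A) : bd a r c A 0 0 = a := rfl
@[simp] lemma bd_zero_succ (a : R) (r c : Fin m → R) (A) (j) : bd a r c A 0 j.succ = r j := by
  simp [bd]
@[simp] lemma bd_succ_zero (a : R) (r c : Fin m → R) (A) (i) : bd a r c A i.succ 0 = c i := by
  simp [bd]
@[simp] lemma bd_succ_succ (a : R) (r c : Fin m → R) (A) (i j) :
    bd a r c A i.succ j.succ = A i j := by
  simp [bd]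

lemma bd_eta (g : Matrix (Fin (m+1)) (Fin (m+1)) R) :
    bd (g 0 0) (fun j => g 0 j.succ) (fun i => g i.succ 0)
      (Matrix.of fun i j => g i.succ j.succ) = g := by
  ext i j
  refine Fin.cases ?_ (fun i' => ?_) i <;> refine Fin.cases ?_ (fun j' => ?_) j <;> simp

lemma bd_mul_bd (a b : R) (r c s d : Fin m → R) (A B : Matrix (Fin m) (Fin m) R) :
    bd a r c A * bd b s d B =
      bd (a * b + r ⬝ᵥ d) (fun j => a * s j + (r ᵥ* B) j) (fun i => c i * b + (A *ᵥ d) i)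
        (Matrix.of fun i j => c i * s j + (A * B) i j) := by
  ext i j
  refine Fin.cases ?_ (fun i' => ?_) i <;> refine Fin.cases ?_ (fun j' => ?_) j <;>
    simp [Matrix.mul_apply, Fin.sum_univ_succ, dotProduct, Matrix.vecMul, Matrix.mulVec]

@[simp] lemma bd_one : (bd 1 0 0 1 : Matrix (Fin (m+1)) (Fin (m+1)) R) = 1 := by
  ext i j
  refine Fin.cases ?_ (fun i' => ?_) i <;> refine Fin.cases ?_ (fun j' => ?_) j <;>
    simp [Matrix.one_apply, Fin.succ_ne_zero, (Fin.succ_ne_zero _).symm]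

lemma bd_congr {a a' : R} {r r' c c' : Fin m → R} {A A' : Matrix (Fin m) (Fin m) R}
    (ha : a = a') (hr : r = r') (hc : c = c') (hA : A = A') :
    bd a r c A = bd a' r' c' A' := by rw [ha, hr, hc, hA]

/-- Pattern L1 : diagonal blocks multiply. -/
lemma bd_diag_mul (X Y : Matrix (Fin m) (Fin m) R) :
    bd 1 0 0 X * bd 1 0 0 Y = bd 1 0 0 (X * Y) := by
  rw [bd_mul_bd]
  refine bd_congr ?_ ?_ ?_ ?_
  · simp
  · funext j; simp
  · funext i; simp
  · ext i j; simp

/-- Pattern L2 : left multiplication by an elementary first-row matrix. -/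
lemma bd_row_mul (z : Fin m → R) (a : R) (r c : Fin m → R) (A : Matrix (Fin m) (Fin m) R) :
    bd 1 z 0 1 * bd a r c A =
      bd (a + z ⬝ᵥ c) (fun j => r j + (z ᵥ* A) j) c A := by
  rw [bd_mul_bd]
  refine bd_congr ?_ ?_ ?_ ?_
  · ring
  · funext j; ring
  · funext i; simp
  · ext i j; simp

/-- Pattern L3 : right multiplication by an elementary first-column matrix. -/
lemma bd_mul_col (w : Fin m → R) (a : R) (r c : Fin m → R) (A : Matrix (Fin m) (Fin m) R) :
    bd a r c A * bd 1 0 w 1 =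
      bd (a + r ⬝ᵥ w) r (fun i => c i + (A *ᵥ w) i) A := by
  rw [bd_mul_bd]
  refine bd_congr ?_ ?_ ?_ ?_
  · ring
  · funext j; simp
  · funext i; ring
  · ext i j; simp

/-- Pattern L4 : left multiplication by a diagonal block. -/
lemma bd_diag_mul_bd (X : Matrix (Fin m) (Fin m) R) (a : R) (r c : Fin m → R)
    (A : Matrix (Fin m) (Fin m) R) :
    bd 1 0 0 X * bd a r c A = bd a r (X *ᵥ c) (X * A) := by
  rw [bd_mul_bd]
  refine bd_congr ?_ ?_ ?_ ?_
  · simp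
  · funext j; simp
  · funext i; simp
  · ext i j; simp

/-- Pattern L5 : right multiplication by a diagonal block. -/
lemma bd_mul_diag_bd (Y : Matrix (Fin m) (Fin m) R) (a : R) (r c : Fin m → R)
    (A : Matrix (Fin m) (Fin m) R) :
    bd a r c A * bd 1 0 0 Y = bd a (r ᵥ* Y) c (A * Y) := by
  rw [bd_mul_bd]
  refine bd_congr ?_ ?_ ?_ ?_
  · simp
  · funext j; simp
  · funext i; simp
  · ext i j; simp

/-- Pattern L6 : lower bordered times upper bordered. -/
lemma bd_lower_mul_upper (c r : Fin m → R) (X Y : Matrix (Fin m) (Fin m) R) :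
    bd 1 0 c X * bd 1 r 0 Y =
      bd 1 r c (Matrix.of fun i j => c i * r j + (X * Y) i j) := by
  rw [bd_mul_bd]
  refine bd_congr ?_ ?_ ?_ rfl
  · simp
  · funext j; simp
  · funext i; simp

/-- Pattern L7 : left multiplication by an elementary first-column matrix. -/
lemma bd_col_mul (d : Fin m → R) (a : R) (r c : Fin m → R) (A : Matrix (Fin m) (Fin m) R) :
    bd 1 0 d 1 * bd a r c A =
      bd a r (fun i => d i * a + c i) (Matrix.of fun i j => d i * r j + A i j) := by
  rw [bd_mul_bd]
  refine bd_congr ?_ ?_ ?_ ?_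
  · simp
  · funext j; simp
  · funext i; simp
  · ext i j; simp

lemma det_bd_upper (a : R) (r : Fin m → R) (A) : (bd a r 0 A).det = a * A.det := by
  rw [Matrix.det_succ_column_zero, Fin.sum_univ_succ]
  have hsub : (bd a r (0 : Fin m → R) A).submatrix Fin.succ Fin.succ = A := by
    ext i j; simp
  simp [Fin.succAbove_zero]
  rw [hsub]

lemma det_bd_lower (a : R) (c : Fin m → R) (A) : (bd a 0 c A).det = a * A.det := by
  rw [Matrix.det_succ_row_zero, Fin.sum_univ_succ]
  have hsub : (bd a (0 : Fin m → R) c A).submatrix Fin.succ Fin.succ = A := by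
    ext i j; simp
  simp [Fin.succAbove_zero]
  rw [hsub]

lemma mul_vecMulVec_mul (u l : Matrix (Fin m) (Fin m) R) (c r : Fin m → R) :
    u * vecMulVec c r * l = vecMulVec (u *ᵥ c) (r ᵥ* l) := by
  ext i j
  simp only [Matrix.mul_apply, vecMulVec_apply, Matrix.mulVec, Matrix.vecMul, dotProduct,
    Finset.sum_mul, Finset.mul_sum]
  refine Finset.sum_congr rfl fun k _ => Finset.sum_congr rfl fun k' _ => by ring

lemma srVec (hSR : ∀ x y : R, (∃ a b : R, a * x + b * y = 1) → ∃ z : R, IsUnit (x + y * z))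
    (v : Fin (m+1) → R) (hv : ∃ b : Fin (m+1) → R, ∑ i, b i * v i = 1) :
    ∃ z : Fin m → R, IsUnit (v 0 + ∑ i, z i * v i.succ) := by
  obtain ⟨b, hb⟩ := hv
  set t := ∑ i : Fin m, b i.succ * v i.succ with ht
  have hpair : ∃ a c : R, a * v 0 + c * t = 1 := ⟨b 0, 1, by
    rw [one_mul, ht, ← Fin.sum_univ_succ (fun i => b i * v i)]; exact hb⟩
  obtain ⟨z₀, hz₀⟩ := hSR (v 0) t hpair
  refine ⟨fun i => z₀ * b i.succ, ?_⟩
  have hsum : ∑ i : Fin m, z₀ * b i.succ * v i.succ = t * z₀ := by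
    rw [ht, Finset.sum_mul]
    exact Finset.sum_congr rfl fun i _ => by ring
  rwa [hsum]

lemma isUpper_one : IsUpperUnitriangular (1 : Matrix (Fin m) (Fin m) R) := by
  constructor <;> intros <;> simp [Matrix.one_apply, *]
  omega

lemma isLower_one : IsLowerUnitriangular (1 : Matrix (Fin m) (Fin m) R) := by
  constructor <;> intros <;> simp [Matrix.one_apply, *]
  omega

lemma isUpper_mul {A B : Matrix (Fin m) (Fin m) R}
    (hA : IsUpperUnitriangular A) (hB : IsUpperUnitriangular B) :
    IsUpperUnitriangular (A * B) := by
  constructor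
  · intro i
    rw [Matrix.mul_apply, Finset.sum_eq_single i]
    · rw [hA.1, hB.1, one_mul]
    · intro k _ hk
      rcases lt_or_gt_of_ne hk with h | h
      · rw [hA.2 i k h, zero_mul]
      · rw [hB.2 k i h, mul_zero]
    · simp
  · intro i j hji
    rw [Matrix.mul_apply]
    refine Finset.sum_eq_zero fun k _ => ?_
    rcases lt_or_ge k i with h | h
    · rw [hA.2 i k h, zero_mul]
    · rw [hB.2 k j (lt_of_lt_of_le hji h), mul_zero]

lemma isLower_mul {A B : Matrix (Fin m) (Fin m) R}
    (hA : IsLowerUnitriangular A) (hB : IsLowerUnitriangular B) :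
    IsLowerUnitriangular (A * B) := by
  constructor
  · intro i
    rw [Matrix.mul_apply, Finset.sum_eq_single i]
    · rw [hA.1, hB.1, one_mul]
    · intro k _ hk
      rcases lt_or_gt_of_ne hk with h | h
      · rw [hB.2 k i h, mul_zero]
      · rw [hA.2 i k h, zero_mul]
    · simp
  · intro i j hij
    rw [Matrix.mul_apply]
    refine Finset.sum_eq_zero fun k _ => ?_
    rcases lt_or_ge i k with h | h
    · rw [hA.2 i k h, zero_mul]
    · rw [hB.2 k j (lt_of_le_of_lt h hij), mul_zero]

lemma isUpper_bd {A : Matrix (Fin m) (Fin m) R} (r : Fin m → R)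
    (hA : IsUpperUnitriangular A) : IsUpperUnitriangular (bd 1 r 0 A) := by
  constructor
  · intro i
    refine Fin.cases ?_ (fun i' => ?_) i <;> simp [hA.1]
  · intro i j hji
    rcases Fin.eq_zero_or_eq_succ i with rfl | ⟨i', rfl⟩
    · exact absurd hji (Fin.not_lt_zero j)
    · rcases Fin.eq_zero_or_eq_succ j with rfl | ⟨j', rfl⟩
      · simp
      · simp only [bd_succ_succ]
        exact hA.2 i' j' (by simpa using hji)

lemma isLower_bd {A : Matrix (Fin m) (Fin m) R} (c : Fin m → R)
    (hA : IsLowerUnitriangular A) : IsLowerUnitriangular (bd 1 0 c A) := by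
  constructor
  · intro i
    refine Fin.cases ?_ (fun i' => ?_) i <;> simp [hA.1]
  · intro i j hij
    rcases Fin.eq_zero_or_eq_succ j with rfl | ⟨j', rfl⟩
    · exact absurd hij (Fin.not_lt_zero i)
    · rcases Fin.eq_zero_or_eq_succ i with rfl | ⟨i', rfl⟩
      · simp
      · simp only [bd_succ_succ]
        exact hA.2 i' j' (by simpa using hij)

/-- The core induction: conjugating by unitriangular matrices into `L·U` form. -/
lemma core (hSR : ∀ x y : R, (∃ a b : R, a * x + b * y = 1) → ∃ z : R, IsUnit (x + y * z)) :
    ∀ (m : ℕ) (g : Matrix (Fin m) (Fin m) R), g.det = 1 →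
      ∃ u u' l l' l₁ u₂ : Matrix (Fin m) (Fin m) R,
        IsUpperUnitriangular u ∧ IsUpperUnitriangular u' ∧ u * u' = 1 ∧
        IsLowerUnitriangular l ∧ IsLowerUnitriangular l' ∧ l * l' = 1 ∧
        IsLowerUnitriangular l₁ ∧ IsUpperUnitriangular u₂ ∧
        u * g * l = l₁ * u₂ := by
  intro m
  induction m with
  | zero =>
    intro g hg
    exact ⟨1, 1, 1, 1, 1, 1, isUpper_one, isUpper_one, Subsingleton.elim _ _,
      isLower_one, isLower_one, Subsingleton.elim _ _, isLower_one, isUpper_one,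
      Subsingleton.elim _ _⟩
  | succ m ih =>
    match m, ih with
    | 0, _ =>
      intro g hg
      have hg1 : g = 1 := by
        ext i j
        have hi : i = 0 := Fin.eq_zero i
        have hj : j = 0 := Fin.eq_zero j
        subst hi; subst hj
        rw [Matrix.det_fin_one] at hg
        simp [hg, Matrix.one_apply]
      refine ⟨1, 1, 1, 1, 1, 1, isUpper_one, isUpper_one, one_mul 1,
        isLower_one, isLower_one, one_mul 1, isLower_one, isUpper_one, ?_⟩
      rw [hg1]; simp
    | (m' + 1), ih =>
      intro g hg
      -- decompose g
      set a : R := g 0 0 with ha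
      set r : Fin (m'+1) → R := fun j => g 0 j.succ with hr
      set c : Fin (m'+1) → R := fun i => g i.succ 0 with hc
      set A : Matrix (Fin (m'+1)) (Fin (m'+1)) R := Matrix.of fun i j => g i.succ j.succ with hA
      have hg_eta : bd a r c A = g := bd_eta g
      -- the second column of g is unimodular
      have hcol : ∑ k, g.adjugate 1 k * g k 1 = 1 := by
        have h2 := congrFun (congrFun (Matrix.adjugate_mul g) 1) 1
        rw [hg] at h2
        simpa [Matrix.mul_apply, Matrix.one_apply] using h2
      obtain ⟨z, hε⟩ := srVec hSR (fun i => g i 1) ⟨fun k => g.adjugate 1 k, hcol⟩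
      have hε' : IsUnit (r 0 + ∑ i, z i * A i 0) := by
        have harg : ((fun i => g i 1) 0 + ∑ i, z i * (fun i => g i 1) i.succ)
            = r 0 + ∑ i, z i * A i 0 := by
          simp only [hr, hA, Matrix.of_apply, Fin.succ_zero_eq_one]
        rwa [harg] at hε
      set E := hε'.unit with hE
      set εinv : R := ↑E⁻¹ with hεinv
      -- elementary matrices
      set a₁ : R := a + z ⬝ᵥ c with ha₁
      set r₁ : Fin (m'+1) → R := fun j => r j + (z ᵥ* A) j with hr₁
      set w : Fin (m'+1) → R := Pi.single 0 (εinv * (1 - a₁)) with hw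
      set c₂ : Fin (m'+1) → R := fun i => c i + (A *ᵥ w) i with hc₂
      have hr₁0 : r₁ 0 = r 0 + ∑ i, z i * A i 0 := by
        simp [hr₁, Matrix.vecMul, dotProduct]
      have hEval : (E : R) = r₁ 0 := by rw [hE, IsUnit.unit_spec, hr₁0]
      have hpivot : a₁ + r₁ ⬝ᵥ w = 1 := by
        have hdot : r₁ ⬝ᵥ w = r₁ 0 * (εinv * (1 - a₁)) := by
          simp [hw, dotProduct, Pi.single_apply, Finset.sum_ite_eq']
        rw [hdot, ← hEval, ← mul_assoc, hεinv, Units.mul_inv, one_mul]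
        ring
      -- h = u₀ * g * l₀ = bd 1 r₁ c₂ A
      have h_eq : bd 1 z 0 1 * g * bd 1 0 w 1 = bd 1 r₁ c₂ A := by
        rw [← hg_eta, bd_row_mul, bd_mul_col, hpivot]
      -- determinant of the Schur complement
      set S : Matrix (Fin (m'+1)) (Fin (m'+1)) R := Matrix.of fun i j => A i j - c₂ i * r₁ j with hS
      have hlc : bd 1 0 (fun i => -c₂ i) 1 * bd 1 r₁ c₂ A = bd 1 r₁ 0 S := by
        rw [bd_col_mul]
        refine bd_congr rfl rfl ?_ ?_
        · funext i; simp
        · ext i j; simp [hS]; ring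
      have hdet_h : (bd 1 r₁ c₂ A).det = 1 := by
        rw [← h_eq, Matrix.det_mul, Matrix.det_mul, hg, det_bd_upper, det_bd_lower]
        simp
      have hdetS : S.det = 1 := by
        have h3 : (bd 1 r₁ 0 S).det = 1 := by
          rw [← hlc, Matrix.det_mul, hdet_h, det_bd_lower]
          simp
        rw [det_bd_upper, one_mul] at h3
        exact h3
      obtain ⟨u, u', l, l', l₁, u₂, hu, hu', huu', hl, hl', hll', hl₁, hu₂, hmain⟩ :=
        ih S hdetS
      -- assemble
      refine ⟨bd 1 0 0 u * bd 1 z 0 1, bd 1 (-z) 0 1 * bd 1 0 0 u',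
        bd 1 0 w 1 * bd 1 0 0 l, bd 1 0 0 l' * bd 1 0 (-w) 1,
        bd 1 0 (u *ᵥ c₂) l₁, bd 1 (r₁ ᵥ* l) 0 u₂,
        isUpper_mul (isUpper_bd 0 hu) (isUpper_bd z isUpper_one),
        isUpper_mul (isUpper_bd (-z) isUpper_one) (isUpper_bd 0 hu'),
        ?_,
        isLower_mul (isLower_bd w isLower_one) (isLower_bd 0 hl),
        isLower_mul (isLower_bd 0 hl') (isLower_bd (-w) isLower_one),
        ?_,
        isLower_bd (u *ᵥ c₂) hl₁, isUpper_bd (r₁ ᵥ* l) hu₂, ?_⟩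
      · -- u * u' = 1
        have e1 : bd 1 z 0 (1 : Matrix (Fin (m'+1)) (Fin (m'+1)) R) * bd 1 (-z) 0 1 = 1 := by
          rw [bd_row_mul]
          exact (bd_congr (by simp) (by funext j; simp) rfl rfl).trans bd_one
        rw [Matrix.mul_assoc, ← Matrix.mul_assoc (bd 1 z 0 1), e1, Matrix.one_mul,
          bd_diag_mul, huu', bd_one]
      · -- l * l' = 1
        have e2 : bd 1 0 w (1 : Matrix (Fin (m'+1)) (Fin (m'+1)) R) * bd 1 0 (-w) 1 = 1 := by
          rw [bd_mul_col]
          exact (bd_congr (by simp) rfl (by funext i; simp) rfl).trans bd_one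
        rw [Matrix.mul_assoc, ← Matrix.mul_assoc (bd 1 0 0 l), bd_diag_mul, hll', bd_one,
          Matrix.one_mul, e2]
      · -- main identity
        have hSmat : S = A - vecMulVec c₂ r₁ := by
          ext i j
          simp [hS, vecMulVec_apply]
        have hkey : l₁ * u₂ = u * A * l - vecMulVec (u *ᵥ c₂) (r₁ ᵥ* l) := by
          rw [← hmain, hSmat, Matrix.mul_sub, Matrix.sub_mul, mul_vecMulVec_mul]
        have hAcomp : u * A * l =
            Matrix.of fun i j => (u *ᵥ c₂) i * (r₁ ᵥ* l) j + (l₁ * u₂) i j := by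
          ext i j
          simp [hkey, vecMulVec_apply]
        calc bd 1 0 0 u * bd 1 z 0 1 * g * (bd 1 0 w 1 * bd 1 0 0 l)
            = bd 1 0 0 u * (bd 1 z 0 1 * g * bd 1 0 w 1) * bd 1 0 0 l := by
              simp only [Matrix.mul_assoc]
          _ = bd 1 0 0 u * bd 1 r₁ c₂ A * bd 1 0 0 l := by rw [h_eq]
          _ = bd 1 r₁ (u *ᵥ c₂) (u * A) * bd 1 0 0 l := by rw [bd_diag_mul_bd]
          _ = bd 1 (r₁ ᵥ* l) (u *ᵥ c₂) (u * A * l) := by rw [bd_mul_diag_bd]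
          _ = bd 1 0 (u *ᵥ c₂) l₁ * bd 1 (r₁ ᵥ* l) 0 u₂ := by
              rw [bd_lower_mul_upper]
              exact bd_congr rfl rfl rfl hAcomp

end Aux

theorem sl_unitriangular_factorisation_of_stableRankOne
    (R : Type*) [CommRing R]
    (hSR : ∀ x y : R, (∃ a b : R, a * x + b * y = 1) → ∃ z : R, IsUnit (x + y * z))
    (n : ℕ) (hn : 2 ≤ n)
    (g : Matrix (Fin n) (Fin n) R) (hg : g.det = 1) :
    ∃ u₁ l₁ u₂ l₂ : Matrix (Fin n) (Fin n) R,
      IsUpperUnitriangular u₁ ∧ IsLowerUnitriangular l₁ ∧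
      IsUpperUnitriangular u₂ ∧ IsLowerUnitriangular l₂ ∧
      g = u₁ * l₁ * u₂ * l₂ := by
  obtain ⟨u, u', l, l', l₁, u₂, hu, hu', huu', hl, hl', hll', hl₁, hu₂, hmain⟩ :=
    core hSR n g hg
  have hu'u : u' * u = 1 := mul_eq_one_comm.mp huu'
  refine ⟨u', l₁, u₂, l', hu', hl₁, hu₂, hl', ?_⟩
  calc g = (u' * u) * g * (l * l') := by rw [hu'u, hll', one_mul, mul_one]
    _ = u' * (u * g * l) * l' := by simp only [Matrix.mul_assoc]
    _ = u' * (l₁ * u₂) * l' := by rw [hmain]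
    _ = u' * l₁ * u₂ * l' := by simp only [Matrix.mul_assoc]
end

section
/- Let R be a commutative ring such that SL(2,R) = U(2,R)·U⁻(2,R)·U(2,R)·U⁻(2,R). Then every element of SL(2,R) is a product of three unipotent matrices. -/
/-!
Write `g = u₁ v₁ u₂ v₂` with `u₁, u₂` upper and `v₁, v₂` lower unitriangular. Conjugating `v₁`
by `u₁` gives `g = (u₁ v₁ u₁⁻¹) (u₁ u₂) v₂`; a conjugate of a unipotent matrix is unipotent, and
`u₁ u₂` is again upper unitriangular.
-/

open Matrix

theorem Units.conj_sub_one_sq_eq_zero {A : Type*} [Ring A] (u : Aˣ) {x : A}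
    (hx : (x - 1) ^ 2 = 0) : (↑u * x * ↑u⁻¹ - 1) ^ 2 = 0 := by
  have hconj : (u : A) * x * ↑u⁻¹ - 1 = u * (x - 1) * ↑u⁻¹ := by
    rw [mul_sub, sub_mul, mul_one, Units.mul_inv]
  rw [hconj, Units.conj_pow, hx, mul_zero, zero_mul]

namespace Matrix

variable {R : Type*} [CommRing R]

theorem det_fin_two_upper_unitriangular (a : R) : det !![1, a; 0, 1] = 1 := by
  simp [det_fin_two_of]

theorem det_fin_two_lower_unitriangular (b : R) : det !![1, 0; b, 1] = 1 := by
  simp [det_fin_two_of]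

theorem fin_two_upper_unitriangular_sub_one_sq (a : R) :
    (!![1, a; 0, 1] - 1 : Matrix (Fin 2) (Fin 2) R) ^ 2 = 0 := by
  rw [one_fin_two, sq]
  ext i j
  fin_cases i <;> fin_cases j <;> simp

theorem fin_two_lower_unitriangular_sub_one_sq (b : R) :
    (!![1, 0; b, 1] - 1 : Matrix (Fin 2) (Fin 2) R) ^ 2 = 0 := by
  rw [one_fin_two, sq]
  ext i j
  fin_cases i <;> fin_cases j <;> simp

theorem fin_two_upper_unitriangular_mul (a c : R) :
    !![1, a; 0, 1] * !![1, c; 0, 1] = (!![1, a + c; 0, 1] : Matrix (Fin 2) (Fin 2) R) := by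
  simp [add_comm]

end Matrix

/-- If `SL(2,R) = U·U⁻·U·U⁻`, then every element of `SL(2,R)`
is a product of three unipotent matrices. -/
theorem product_of_three_unipotents (R : Type*) [CommRing R]
    (h : ∀ g : Matrix (Fin 2) (Fin 2) R, g.det = 1 →
      ∃ a b c d : R,
        g = !![1, a; 0, 1] * !![1, 0; b, 1] * !![1, c; 0, 1] * !![1, 0; d, 1]) :
    ∀ g : Matrix (Fin 2) (Fin 2) R, g.det = 1 →
      ∃ x y z : Matrix (Fin 2) (Fin 2) R,
        x.det = 1 ∧ y.det = 1 ∧ z.det = 1 ∧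
        (x - 1) ^ 2 = 0 ∧ (y - 1) ^ 2 = 0 ∧ (z - 1) ^ 2 = 0 ∧
        g = x * y * z := by
  intro g hg
  obtain ⟨a, b, c, d, rfl⟩ := h g hg
  obtain ⟨u, hu⟩ : IsUnit !![1, a; 0, 1] := (isUnit_iff_isUnit_det _).mpr
    (by rw [det_fin_two_upper_unitriangular]; exact isUnit_one)
  refine ⟨u * !![1, 0; b, 1] * (↑u⁻¹ : Matrix (Fin 2) (Fin 2) R), !![1, a + c; 0, 1],
    !![1, 0; d, 1], ?_, ?_, ?_, ?_, ?_, ?_, ?_⟩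
  · rw [det_units_conj, det_fin_two_lower_unitriangular]
  · exact det_fin_two_upper_unitriangular _
  · exact det_fin_two_lower_unitriangular _
  · exact u.conj_sub_one_sq_eq_zero (fin_two_lower_unitriangular_sub_one_sq b)
  · exact fin_two_upper_unitriangular_sub_one_sq _
  · exact fin_two_lower_unitriangular_sub_one_sq _
  · rw [← fin_two_upper_unitriangular_mul]
    rw [← hu]
    simp only [mul_assoc, Units.inv_mul_cancel_left]
end

section
/- If R is a commutative ring such that SL(2,R) = U(2,R)·U⁻(2,R)·U(2,R), then x² = x for all x ∈ R, i.e. R is Boolean. -/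
/-- If every element of `SL(2,R)` is a product `u₁·l·u₂` of an
upper, a lower, and an upper unitriangular matrix, then `R` is Boolean:
`x² = x` for all `x ∈ R`. -/
theorem boolean_of_length_three_factorisation (R : Type*) [CommRing R]
    (h : ∀ g : Matrix (Fin 2) (Fin 2) R, g.det = 1 →
      ∃ a b c : R, g = !![1, a; 0, 1] * !![1, 0; b, 1] * !![1, c; 0, 1]) :
    ∀ x : R, x ^ 2 = x := by
  intro x
  obtain ⟨a, b, c, hg⟩ := h !![1 + x, -1; x ^ 2, 1 - x]
    (by rw [Matrix.det_fin_two_of]; ring)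
  rw [Matrix.mul_fin_two, Matrix.mul_fin_two] at hg
  have e10 := congrFun (congrFun hg 1) 0
  have e00 := congrFun (congrFun hg 0) 0
  simp at e10 e00
  -- e10 : x ^ 2 = b (up to normalization), e00 : 1 + x = 1 + a*b (up to normalization)
  have hax : a * x ^ 2 = x := by
    have hb : b = x ^ 2 := by linear_combination -e10
    linear_combination -e00 - a * hb
  obtain ⟨a', b', c', hg'⟩ := h !![x + 1 - x * a, 0; 0, x * a ^ 2 + 1 - x * a]
    (by rw [Matrix.det_fin_two_of]; linear_combination (2 * a - 1 - a ^ 2) * hax)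
  rw [Matrix.mul_fin_two, Matrix.mul_fin_two] at hg'
  have f10 := congrFun (congrFun hg' 1) 0
  have f00 := congrFun (congrFun hg' 0) 0
  simp at f10 f00
  have hb' : b' = 0 := by linear_combination -f10
  have hxa : x = x * a := by linear_combination f00 + a' * hb'
  linear_combination x * hxa + hax
end

section
/- Let R = ℤ[1/p] for a prime p, and let g ∈ SL(2,R) have top row (p^α·a, p^β·b) with a,b integers not divisible by p, α,β ∈ ℤ, and α ≥ β. Suppose q = p^(α-β)·a + b·k is a prime (for some k ∈ ℤ) not equal to p such that p is a primitive root mod q. Then there exist k, l, θ ∈ R such that g·t21(k)·t12(l)·t21(θ)·t12(-p^(β+u)) is lower unitriangular for a suitable u ≥ 1; consequently g ∈ U⁻·U·U⁻·U·U⁻ where U, U⁻ are the upper and lower unitriangular subgroups of SL(2,ℤ[1/p]). -/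
/-- The ring `ℤ[1/p]`, as the localization of `ℤ` away from `p`. -/
abbrev ZInvP (p : ℕ) : Type := Localization.Away (p : ℤ)

/-- Case 1 (`α ≥ β`) of the proof of Lemma 6: over `R = ℤ[1/p]`,
a matrix `g ∈ SL(2,R)` with top row `(pᵅ·a, pᵝ·b)`, `p ∤ a, b`, can be reduced to a
lower unitriangular matrix by four elementary transvections, provided
`q = p^(α-β)·a + b·k` is a prime `≠ p` having `p` as a primitive root; consequently
`g ∈ U⁻·U·U⁻·U·U⁻`. -/
theorem sl2_zinvp_case_one (p : ℕ) (hp : p.Prime)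
    (P : (ZInvP p)ˣ) (hP : (P : ZInvP p) = algebraMap ℤ (ZInvP p) (p : ℤ))
    (a b k : ℤ) (ha : ¬ (p : ℤ) ∣ a) (hb : ¬ (p : ℤ) ∣ b)
    (α β : ℤ) (hαβ : β ≤ α)
    (g : Matrix (Fin 2) (Fin 2) (ZInvP p)) (hdet : g.det = 1)
    (h00 : g 0 0 = (↑(P ^ α) : ZInvP p) * algebraMap ℤ (ZInvP p) a)
    (h01 : g 0 1 = (↑(P ^ β) : ZInvP p) * algebraMap ℤ (ZInvP p) b)
    (q : ℕ) (hq : q.Prime) (hqp : q ≠ p)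
    (hqk : (q : ℤ) = (p : ℤ) ^ (α - β).toNat * a + b * k)
    (hprim : ∀ x : ZMod q, x ≠ 0 → ∃ m : ℕ, x = (p : ZMod q) ^ m) :
    (∃ (k' l θ : ZInvP p) (u : ℕ), 1 ≤ u ∧ ∃ c : ZInvP p,
      g * !![1, 0; k', 1] * !![1, l; 0, 1] * !![1, 0; θ, 1] *
        !![1, -(↑(P ^ (β + (u : ℤ))) : ZInvP p); 0, 1] = !![1, 0; c, 1]) ∧
    ∃ a₁ a₂ a₃ a₄ a₅ : ZInvP p,
      g = !![1, 0; a₁, 1] * !![1, a₂; 0, 1] * !![1, 0; a₃, 1] *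
        !![1, a₄; 0, 1] * !![1, 0; a₅, 1] := by
  haveI : Fact q.Prime := ⟨hq⟩
  -- q does not divide p
  have hqndvdp : ¬ q ∣ p := by
    intro h
    rcases hp.eq_one_or_self_of_dvd q h with h1 | h1
    · exact hq.one_lt.ne' h1
    · exact hqp h1
  have hpq0 : ((p : ℤ) : ZMod q) ≠ 0 := by
    rw [Ne, Int.cast_natCast, ZMod.natCast_eq_zero_iff]
    exact hqndvdp
  -- the ring hom φ : ZInvP p →+* ZMod q
  have hpu : IsUnit ((Int.castRingHom (ZMod q)) (p : ℤ)) := by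
    simpa [isUnit_iff_ne_zero] using hpq0
  let φ : ZInvP p →+* ZMod q := IsLocalization.Away.lift (p : ℤ) hpu
  have hφa : ∀ n : ℤ, φ (algebraMap ℤ (ZInvP p) n) = (n : ZMod q) := by
    intro n
    exact IsLocalization.lift_eq _ n
  -- t with α = β + t
  set t : ℕ := (α - β).toNat with htdef
  have ht : α = β + (t : ℤ) := by
    rw [htdef, Int.toNat_of_nonneg (sub_nonneg.mpr hαβ)]; ring
  -- q does not divide b
  have hqb : ¬ (q : ℤ) ∣ b := by
    intro hqb
    have hqa : (q : ℤ) ∣ a := by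
      have h1 : (q : ℤ) ∣ (p : ℤ) ^ t * a := by
        have : (p : ℤ) ^ t * a = (q : ℤ) - b * k := by rw [hqk]; ring
        rw [this]
        exact dvd_sub (dvd_refl _) (hqb.mul_right k)
      have hqZ : Prime (q : ℤ) := Nat.prime_iff_prime_int.mp hq
      rcases hqZ.dvd_mul.mp h1 with h2 | h2
      · exact absurd (Int.natCast_dvd_natCast.mp (hqZ.dvd_of_dvd_pow h2)) hqndvdp
      · exact h2
    -- contradiction with det
    have hb0 : ((b : ℤ) : ZMod q) = 0 := (ZMod.intCast_zmod_eq_zero_iff_dvd _ _).mpr hqb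
    have ha0 : ((a : ℤ) : ZMod q) = 0 := (ZMod.intCast_zmod_eq_zero_iff_dvd _ _).mpr hqa
    have hd := Matrix.det_fin_two g
    rw [hdet] at hd
    have := congrArg φ hd
    rw [map_one, map_sub, map_mul, map_mul, h00, h01, map_mul, map_mul, hφa, hφa, ha0, hb0] at this
    simp at this
  have hb0 : ((b : ℤ) : ZMod q) ≠ 0 := fun h =>
    hqb ((ZMod.intCast_zmod_eq_zero_iff_dvd _ _).mp h)
  -- choose u
  obtain ⟨m, hm⟩ := hprim _ hb0
  set u : ℕ := m + (q - 1) with hudef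
  have hu1 : 1 ≤ u := by
    have h2q : 2 ≤ q := hq.two_le
    omega
  have hpow : ((p : ZMod q)) ^ u = ((b : ℤ) : ZMod q) := by
    rw [hudef, pow_add, ZMod.pow_card_sub_one_eq_one (by exact_mod_cast hpq0), mul_one, hm]
  -- c₀ with p^u - b = q * c₀
  have hdvd : (q : ℤ) ∣ ((p : ℤ) ^ u - b) := by
    rw [← ZMod.intCast_zmod_eq_zero_iff_dvd]
    push_cast
    rw [← hpow]
    push_cast
    ring
  obtain ⟨c₀, hc₀⟩ := hdvd
  -- names
  set k' : ZInvP p := algebraMap ℤ (ZInvP p) k with hk'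
  set l : ZInvP p := algebraMap ℤ (ZInvP p) c₀ with hl
  set B : ZInvP p := (↑(P ^ (β + (u : ℤ))) : ZInvP p) with hBdef
  set Av : ZInvP p := (↑(P ^ β) : ZInvP p) * algebraMap ℤ (ZInvP p) (q : ℤ) with hAvdef
  set θ : ZInvP p := (↑((P ^ (β + (u : ℤ)))⁻¹) : ZInvP p) * (1 - Av) with hθ
  -- key algebraic identities
  have hPpow : ∀ (γ : ℤ) (n : ℕ), (↑(P ^ (γ + (n : ℤ))) : ZInvP p) = (↑(P ^ γ) : ZInvP p) * algebraMap ℤ (ZInvP p) ((p : ℤ) ^ n) := by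
    intro γ n
    rw [zpow_add, Units.val_mul, zpow_natCast, Units.val_pow_eq_pow_val, hP, map_pow]
  have hA : g 0 0 + g 0 1 * k' = Av := by
    rw [h00, h01, ht, hPpow, hAvdef, hqk, hk']
    push_cast [map_add, map_mul, map_pow]
    ring
  have hB : Av * l + g 0 1 = B := by
    rw [h01, hAvdef, hBdef, hPpow, hl]
    have : (p : ℤ) ^ u = (q : ℤ) * c₀ + b := by rw [← hc₀]; ring
    rw [this]
    push_cast [map_add, map_mul]
    ring
  have hT : Av + B * θ = 1 := by
    rw [hθ, hBdef, ← mul_assoc, Units.mul_inv, one_mul]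
    ring
  -- the matrix M
  set E1 : Matrix (Fin 2) (Fin 2) (ZInvP p) := !![1, 0; k', 1]
  set E2 : Matrix (Fin 2) (Fin 2) (ZInvP p) := !![1, l; 0, 1]
  set E3 : Matrix (Fin 2) (Fin 2) (ZInvP p) := !![1, 0; θ, 1]
  set E4 : Matrix (Fin 2) (Fin 2) (ZInvP p) := !![1, -B; 0, 1]
  set M : Matrix (Fin 2) (Fin 2) (ZInvP p) := g * E1 * E2 * E3 * E4 with hM
  have m00 : M 0 0 = (g 0 0 + g 0 1 * k') + ((g 0 0 + g 0 1 * k') * l + g 0 1) * θ := by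
    simp [hM, E1, E2, E3, E4, Matrix.mul_apply, Fin.sum_univ_two]
    try ring
  have m01 : M 0 1 = ((g 0 0 + g 0 1 * k') + ((g 0 0 + g 0 1 * k') * l + g 0 1) * θ) * (-B)
      + ((g 0 0 + g 0 1 * k') * l + g 0 1) := by
    simp [hM, E1, E2, E3, E4, Matrix.mul_apply, Fin.sum_univ_two]
    try ring
  have h1 : M 0 0 = 1 := by rw [m00, hA, hB, hT]
  have h2 : M 0 1 = 0 := by rw [m01, hA, hB, hT]; ring
  have hdetE : ∀ x : ZInvP p, (!![1, (0:ZInvP p); x, 1]).det = 1 := by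
    intro x; rw [Matrix.det_fin_two_of]; ring
  have hdetE' : ∀ x : ZInvP p, (!![1, x; (0:ZInvP p), 1]).det = 1 := by
    intro x; rw [Matrix.det_fin_two_of]; ring
  have hdetM : M.det = 1 := by
    rw [hM, Matrix.det_mul, Matrix.det_mul, Matrix.det_mul, Matrix.det_mul, hdet,
      hdetE, hdetE', hdetE, hdetE']
    ring
  have h3 : M 1 1 = 1 := by
    have e := Matrix.det_fin_two M
    rw [hdetM, h1, h2] at e
    simp at e
    exact e.symm
  have hMeq : M = !![1, 0; M 1 0, 1] := by
    have e := Matrix.eta_fin_two M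
    rw [h1, h2, h3] at e
    exact e
  have c12 : ∀ x y : ZInvP p, x + y = 0 →
      !![(1:ZInvP p), x; 0, 1] * !![1, y; 0, 1] = 1 := by
    intro x y hxy
    ext i j
    fin_cases i <;> fin_cases j <;>
      simp [Matrix.mul_apply, Fin.sum_univ_two, Matrix.one_apply] <;>
      linear_combination hxy
  have c21 : ∀ x y : ZInvP p, x + y = 0 →
      !![(1:ZInvP p), 0; x, 1] * !![1, 0; y, 1] = 1 := by
    intro x y hxy
    ext i j
    fin_cases i <;> fin_cases j <;>
      simp [Matrix.mul_apply, Fin.sum_univ_two, Matrix.one_apply] <;>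
      linear_combination hxy
  have s4 : g * E1 * E2 * E3 * E4 * !![1, B; 0, 1] = g * E1 * E2 * E3 := by
    rw [mul_assoc (g * E1 * E2 * E3), c12 (-B) B (by ring), mul_one]
  have s3 : g * E1 * E2 * E3 * !![1, 0; -θ, 1] = g * E1 * E2 := by
    rw [mul_assoc (g * E1 * E2), c21 θ (-θ) (by ring), mul_one]
  have s2 : g * E1 * E2 * !![1, -l; 0, 1] = g * E1 := by
    rw [mul_assoc (g * E1), c12 l (-l) (by ring), mul_one]
  have s1 : g * E1 * !![1, 0; -k', 1] = g := by
    rw [mul_assoc g, c21 k' (-k') (by ring), mul_one]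
  refine ⟨⟨k', l, θ, u, hu1, M 1 0, hMeq⟩, M 1 0, B, -θ, -l, -k', ?_⟩
  rw [← hMeq, hM, s4, s3, s2, s1]
end
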